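/- arXiv:2112.02180 — 6 statements merged into one kernel-verified Lean document; each statement's English description precedes it below -/
import Mathlib

section
/- (Tilted mean of log-weights is bounded by the KL divergence.) Assume D_KL(p ‖ μ) < ∞ and let β ∈ [0,1] be such that w^β·|log w| is μ-integrable on {w > 0}. Then Z(β)^{-1} ∫_{w>0} w^β·log w dμ ≤ D_KL(p ‖ μ); that is, the expectation of log w under the intermediate distribution p_β never exceeds its expectation under the posterior p = p_1. -/
open MeasureTheory Real

variable {Ω : Type*} [MeasurableSpace Ω]

/-- The partition function `Z(β) = ∫ w^β dμ` (with the convention `0^0 = 1`,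
which is built into `Real.rpow`). -/
noncomputable def Z (μ : Measure Ω) (w : Ω → ℝ) (β : ℝ) : ℝ :=
  ∫ x, w x ^ β ∂μ

/-- Chebyshev-type correlation inequality via symmetrization over a product
measure. -/
lemma key_chebyshev {ν : Measure Ω} [IsFiniteMeasure ν] (f g h : Ω → ℝ)
    (hf : Integrable f ν) (hh : Integrable h ν)
    (hfg : Integrable (fun x => f x * g x) ν)
    (hhg : Integrable (fun x => h x * g x) ν)
    (hpt : ∀ᵐ z ∂(ν.prod ν),
      0 ≤ (f z.1 * h z.2 - f z.2 * h z.1) * (g z.2 - g z.1)) :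
    (∫ x, f x * g x ∂ν) * (∫ x, h x ∂ν)
      ≤ (∫ x, f x ∂ν) * (∫ x, h x * g x ∂ν) := by
  have h1 : Integrable (fun z : Ω × Ω => f z.1 * (h z.2 * g z.2)) (ν.prod ν) :=
    hf.mul_prod hhg
  have h2 : Integrable (fun z : Ω × Ω => (f z.1 * g z.1) * h z.2) (ν.prod ν) :=
    hfg.mul_prod hh
  have h3 : Integrable (fun z : Ω × Ω => h z.1 * (f z.2 * g z.2)) (ν.prod ν) :=
    hh.mul_prod hfg
  have h4 : Integrable (fun z : Ω × Ω => (h z.1 * g z.1) * f z.2) (ν.prod ν) :=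
    hhg.mul_prod hf
  have hE : (fun z : Ω × Ω => (f z.1 * h z.2 - f z.2 * h z.1) * (g z.2 - g z.1))
      = fun z : Ω × Ω => (f z.1 * (h z.2 * g z.2) - (f z.1 * g z.1) * h z.2)
          + ((h z.1 * g z.1) * f z.2 - h z.1 * (f z.2 * g z.2)) := by
    funext z; ring
  have hnn : 0 ≤ ∫ z, ((f z.1 * h z.2 - f z.2 * h z.1) * (g z.2 - g z.1))
      ∂(ν.prod ν) := integral_nonneg_of_ae hpt
  have h12 : Integrable (fun z : Ω × Ω =>
      f z.1 * (h z.2 * g z.2) - (f z.1 * g z.1) * h z.2) (ν.prod ν) := h1.sub h2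
  have h43 : Integrable (fun z : Ω × Ω =>
      (h z.1 * g z.1) * f z.2 - h z.1 * (f z.2 * g z.2)) (ν.prod ν) := h4.sub h3
  rw [hE] at hnn
  rw [integral_add h12 h43, integral_sub h1 h2, integral_sub h4 h3] at hnn
  rw [integral_prod_mul f (fun x => h x * g x), integral_prod_mul h (fun x => f x * g x),
    integral_prod_mul (fun x => f x * g x) h, integral_prod_mul (fun x => h x * g x) f]
    at hnn
  nlinarith [hnn]

/-- Pointwise sign inequality used in the symmetrization. -/
lemma pointwise_sign {β : ℝ} (hβ₁ : β ≤ 1) {t s : ℝ} (ht : 0 < t) (hs : 0 < s) :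
    0 ≤ (t ^ β * s - s ^ β * t) * (Real.log s - Real.log t) := by
  rcases le_total t s with hts | hst
  · have hlog : Real.log t ≤ Real.log s := Real.log_le_log ht hts
    have hpow : s ^ (β - 1) ≤ t ^ (β - 1) :=
      Real.rpow_le_rpow_of_nonpos ht hts (by linarith)
    have h1 : s ^ β * t ≤ t ^ β * s := by
      have ht' : t ^ β = t ^ (β - 1) * t := by
        rw [← Real.rpow_add_one ht.ne' (β - 1)]; ring_nf
      have hs' : s ^ β = s ^ (β - 1) * s := by
        rw [← Real.rpow_add_one hs.ne' (β - 1)]; ring_nf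
      rw [ht', hs']
      calc s ^ (β - 1) * s * t ≤ t ^ (β - 1) * s * t := by
            have := mul_le_mul_of_nonneg_right
              (mul_le_mul_of_nonneg_right hpow hs.le) ht.le
            linarith
        _ = t ^ (β - 1) * t * s := by ring
    nlinarith
  · have hlog : Real.log s ≤ Real.log t := Real.log_le_log hs hst
    have hpow : t ^ (β - 1) ≤ s ^ (β - 1) :=
      Real.rpow_le_rpow_of_nonpos hs hst (by linarith)
    have h1 : t ^ β * s ≤ s ^ β * t := by
      have ht' : t ^ β = t ^ (β - 1) * t := by
        rw [← Real.rpow_add_one ht.ne' (β - 1)]; ring_nf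
      have hs' : s ^ β = s ^ (β - 1) * s := by
        rw [← Real.rpow_add_one hs.ne' (β - 1)]; ring_nf
      rw [ht', hs']
      calc t ^ (β - 1) * t * s ≤ s ^ (β - 1) * t * s := by
            have := mul_le_mul_of_nonneg_right
              (mul_le_mul_of_nonneg_right hpow ht.le) hs.le
            linarith
        _ = s ^ (β - 1) * s * t := by ring
    nlinarith

/-- **Tilted mean of log-weights is bounded by the KL divergence.**
If `D_KL(p ‖ μ) = ∫ w log w dμ < ∞` and `β ∈ [0,1]` is such that `w^β·|log w|`
is `μ`-integrable on `{w > 0}`, then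
`Z(β)⁻¹ ∫_{w>0} w^β·log w dμ ≤ D_KL(p ‖ μ)`. -/
theorem tilted_mean_le_klDiv
    (μ : Measure Ω) [IsProbabilityMeasure μ]
    (w : Ω → ℝ) (hw_meas : Measurable w) (hw_nonneg : ∀ x, 0 ≤ w x)
    (hw_int : ∫ x, w x ∂μ = 1)
    (hKL_fin : Integrable (fun x => w x * Real.log (w x)) μ)
    (β : ℝ) (hβ₀ : 0 ≤ β) (hβ₁ : β ≤ 1)
    (hI : IntegrableOn (fun x => w x ^ β * |Real.log (w x)|) {x | 0 < w x} μ) :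
    (Z μ w β)⁻¹ * ∫ x in {x | 0 < w x}, w x ^ β * Real.log (w x) ∂μ
      ≤ ∫ x, w x * Real.log (w x) ∂μ := by
  set S : Set Ω := {x | 0 < w x} with hS_def
  have hS : MeasurableSet S := measurableSet_lt measurable_const hw_meas
  -- w is integrable
  have hw_integrable : Integrable w μ := by
    by_contra hcon
    rw [integral_undef hcon] at hw_int
    exact zero_ne_one hw_int
  have hwβ_meas : Measurable (fun x => w x ^ β) := by fun_prop
  -- w^β is integrable (bounded by 1 + w)
  have hwβ_integrable : Integrable (fun x => w x ^ β) μ := by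
    refine Integrable.mono' ((integrable_const (1 : ℝ)).add hw_integrable)
      hwβ_meas.aestronglyMeasurable ?_
    filter_upwards with x
    simp only [Pi.add_apply]
    rw [Real.norm_eq_abs, abs_of_nonneg (Real.rpow_nonneg (hw_nonneg x) β)]
    rcases le_total (w x) 1 with h | h
    · have : w x ^ β ≤ 1 := Real.rpow_le_one (hw_nonneg x) h hβ₀
      linarith [hw_nonneg x]
    · have : w x ^ β ≤ w x ^ (1 : ℝ) :=
        Real.rpow_le_rpow_of_exponent_le h hβ₁
      rw [Real.rpow_one] at this
      linarith
  -- D_KL ≥ 0 via w log w ≥ w - 1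
  have hKL_nonneg : 0 ≤ ∫ x, w x * Real.log (w x) ∂μ := by
    have hmono : ∀ x, w x - 1 ≤ w x * Real.log (w x) := by
      intro x
      rcases (hw_nonneg x).eq_or_lt with h | h
      · rw [← h]; norm_num
      · have h1 := Real.one_sub_inv_le_log_of_pos h
        have h2 : w x * (w x)⁻¹ = 1 := mul_inv_cancel₀ h.ne'
        nlinarith [mul_le_mul_of_nonneg_left h1 (hw_nonneg x)]
    have hint : ∫ x, (w x - 1) ∂μ ≤ ∫ x, w x * Real.log (w x) ∂μ :=
      integral_mono (hw_integrable.sub (integrable_const 1)) hKL_fin hmono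
    rw [integral_sub hw_integrable (integrable_const 1)] at hint
    simp [hw_int] at hint
    linarith
  -- Functions on restricted measure
  set ν : Measure Ω := μ.restrict S with hν_def
  have : IsFiniteMeasure ν := by
    rw [hν_def]; infer_instance
  set f : Ω → ℝ := fun x => w x ^ β with hf_def
  set g : Ω → ℝ := fun x => Real.log (w x) with hg_def
  have hf : Integrable f ν := hwβ_integrable.restrict
  have hh : Integrable w ν := hw_integrable.restrict
  have hhg : Integrable (fun x => w x * g x) ν := hKL_fin.restrict
  have hfg : Integrable (fun x => f x * g x) ν := by
    refine Integrable.mono' hI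
      ((hwβ_meas.mul hw_meas.log).aestronglyMeasurable).restrict ?_
    filter_upwards with x
    rw [Real.norm_eq_abs, abs_mul, abs_of_nonneg (Real.rpow_nonneg (hw_nonneg x) β)]
  -- pointwise sign on S × S
  have hpt : ∀ᵐ z ∂(ν.prod ν),
      0 ≤ (f z.1 * w z.2 - f z.2 * w z.1) * (g z.2 - g z.1) := by
    rw [hν_def, Measure.prod_restrict]
    refine ae_restrict_of_forall_mem (hS.prod hS) ?_
    rintro ⟨x, y⟩ ⟨hx, hy⟩
    exact pointwise_sign hβ₁ hx hy
  have hkey := key_chebyshev f g w hf hh hfg hhg hpt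
  -- identify restricted integrals with full ones for w and w log w
  have hw_eqS : ∫ x in S, w x ∂μ = 1 := by
    rw [← hw_int]
    rw [← integral_indicator hS]
    congr 1
    funext x
    by_cases hx : x ∈ S
    · simp [Set.indicator_of_mem hx]
    · have : w x = 0 := le_antisymm (not_lt.mp hx) (hw_nonneg x)
      simp [Set.indicator_of_notMem hx, this]
  have hwg_eqS : ∫ x in S, w x * g x ∂μ = ∫ x, w x * Real.log (w x) ∂μ := by
    rw [← integral_indicator hS]
    congr 1
    funext x
    by_cases hx : x ∈ S
    · simp [Set.indicator_of_mem hx, hg_def]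
    · have : w x = 0 := le_antisymm (not_lt.mp hx) (hw_nonneg x)
      simp [Set.indicator_of_notMem hx, this]
  -- Z_S ≤ Z and Z ≥ 0
  have hZS_le : ∫ x in S, f x ∂μ ≤ Z μ w β := by
    exact setIntegral_le_integral hwβ_integrable
      (Filter.Eventually.of_forall fun x => Real.rpow_nonneg (hw_nonneg x) β)
  have hZ_nonneg : 0 ≤ Z μ w β :=
    integral_nonneg fun x => Real.rpow_nonneg (hw_nonneg x) β
  -- main inequality: I ≤ Z * KL
  have hmain : (∫ x in S, f x * g x ∂μ)
      ≤ Z μ w β * ∫ x, w x * Real.log (w x) ∂μ := by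
    have h1 : (∫ x in S, f x * g x ∂μ)
        ≤ (∫ x in S, f x ∂μ) * ∫ x, w x * Real.log (w x) ∂μ := by
      have := hkey
      rw [hν_def] at this
      rw [hw_eqS, hwg_eqS, mul_one] at this
      exact this
    refine h1.trans ?_
    exact mul_le_mul_of_nonneg_right hZS_le hKL_nonneg
  -- conclude
  rcases hZ_nonneg.eq_or_lt with hZ0 | hZpos
  · rw [← hZ0, inv_zero, zero_mul]
    exact hKL_nonneg
  · rw [inv_mul_le_iff₀ hZpos]
    exact hmain
end

section
/- (Derivative of the information gain equals a variance; quantitative form of Lemma B.1.) Let β₀ ∈ (0,1) and suppose there exist ε > 0 and μ-integrable functions g₁, g₂ such that w^β·|log w| ≤ g₁ and w^β·(log w)² ≤ g₂ μ-almost everywhere on {w > 0} for all β with |β − β₀| ≤ ε. Then the information gain I(β) = ∫ log w dp_β is differentiable at β₀ with I′(β₀) = ∫ (log w)² dp_{β₀} − (∫ log w dp_{β₀})², and in particular I′(β₀) ≥ 0. -/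
open MeasureTheory Real
open scoped NNReal ENNReal

variable {Ω : Type*} [MeasurableSpace Ω]

/-- The intermediate (tempered) distribution `p_β`, the probability measure with
density `w^β / Z(β)` with respect to `μ`. -/
noncomputable def temper (μ : Measure Ω) (w : Ω → ℝ) (β : ℝ) : Measure Ω :=
  μ.withDensity fun x => ENNReal.ofReal (w x ^ β / Z μ w β)

/-- **Derivative of the information gain equals a variance (quantitative Lemma B.1).**
Under suitable domination hypotheses near `β₀ ∈ (0,1)`, the information gain
`I(β) = ∫ log w dp_β` is differentiable at `β₀`, with derivative equal to the
variance of `log w` under `p_β₀`; in particular the derivative is nonnegative. -/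
theorem info_gain_hasDerivAt_variance
    (μ : Measure Ω) [IsProbabilityMeasure μ]
    (w : Ω → ℝ) (hw_meas : Measurable w) (hw_nonneg : ∀ x, 0 ≤ w x)
    (hw_int : ∫ x, w x ∂μ = 1)
    (β₀ : ℝ) (hβ₀pos : 0 < β₀) (hβ₀lt : β₀ < 1)
    (ε : ℝ) (hε : 0 < ε) (g₁ g₂ : Ω → ℝ)
    (hg₁ : Integrable g₁ μ) (hg₂ : Integrable g₂ μ)
    (hdom₁ : ∀ β : ℝ, |β - β₀| ≤ ε →
      ∀ᵐ x ∂μ, 0 < w x → w x ^ β * |Real.log (w x)| ≤ g₁ x)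
    (hdom₂ : ∀ β : ℝ, |β - β₀| ≤ ε →
      ∀ᵐ x ∂μ, 0 < w x → w x ^ β * Real.log (w x) ^ 2 ≤ g₂ x) :
    HasDerivAt (fun β => ∫ x, Real.log (w x) ∂(temper μ w β))
      ((∫ x, Real.log (w x) ^ 2 ∂(temper μ w β₀))
        - (∫ x, Real.log (w x) ∂(temper μ w β₀)) ^ 2) β₀
    ∧ 0 ≤ (∫ x, Real.log (w x) ^ 2 ∂(temper μ w β₀))
        - (∫ x, Real.log (w x) ∂(temper μ w β₀)) ^ 2 := by
  classical
  -- w is integrable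
  have hw_intg : Integrable w μ := by
    by_contra h
    rw [integral_undef h] at hw_int
    norm_num at hw_int
  set δ : ℝ := min ε (β₀ / 2) with hδdef
  have hδpos : 0 < δ := lt_min hε (by linarith)
  have hδε : δ ≤ ε := min_le_left _ _
  have hδβ : δ ≤ β₀ / 2 := min_le_right _ _
  set a : ℝ := β₀ - δ with ha_def
  set b : ℝ := β₀ + δ with hb_def
  have ha_pos : 0 < a := by simp only [ha_def]; linarith
  have hball_pos : ∀ β ∈ Metric.ball β₀ δ, 0 < β := by
    intro β hβ
    rw [Metric.mem_ball, Real.dist_eq, abs_lt] at hβ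
    linarith [hβ.1]
  -- measurability
  have hmeas_pow : ∀ β : ℝ, 0 ≤ β → Measurable fun x : Ω => w x ^ β := fun β hβ =>
    (Real.continuous_rpow_const hβ).measurable.comp hw_meas
  have hmeas1 : ∀ β : ℝ, 0 ≤ β → Measurable fun x : Ω => w x ^ β * Real.log (w x) :=
    fun β hβ => (hmeas_pow β hβ).mul hw_meas.log
  have hmeas2 : ∀ β : ℝ, 0 ≤ β → Measurable fun x : Ω => w x ^ β * Real.log (w x) ^ 2 :=
    fun β hβ => (hmeas_pow β hβ).mul (hw_meas.log.pow_const 2)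
  -- monotone bound on w^β over the ball
  have pow_le : ∀ x : Ω, 0 < w x → ∀ β ∈ Metric.ball β₀ δ,
      w x ^ β ≤ max (w x ^ a) (w x ^ b) := by
    intro x hx β hβ
    rw [Metric.mem_ball, Real.dist_eq, abs_lt] at hβ
    rcases le_total 1 (w x) with h1 | h1
    · exact le_max_of_le_right
        (Real.rpow_le_rpow_of_exponent_le h1 (by simp only [hb_def]; linarith [hβ.2]))
    · exact le_max_of_le_left
        (Real.rpow_le_rpow_of_exponent_ge hx h1 (by simp only [ha_def]; linarith [hβ.1]))
  have haε : |a - β₀| ≤ ε := by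
    rw [show a - β₀ = -δ by simp [ha_def]]; rwa [abs_neg, abs_of_pos hδpos]
  have hbε : |b - β₀| ≤ ε := by
    rw [show b - β₀ = δ by simp [hb_def]]; rwa [abs_of_pos hδpos]
  -- uniform a.e. bounds on the ball
  have hbound₁ : ∀ᵐ x ∂μ, ∀ β ∈ Metric.ball β₀ δ,
      ‖w x ^ β * Real.log (w x)‖ ≤ max (g₁ x) 0 := by
    filter_upwards [hdom₁ a haε, hdom₁ b hbε] with x hxa hxb β hβ
    rcases (hw_nonneg x).eq_or_lt with h0 | h0
    · rw [← h0, Real.zero_rpow (hball_pos β hβ).ne', zero_mul, norm_zero]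
      exact le_max_right _ _
    · have hrw : ‖w x ^ β * Real.log (w x)‖ = w x ^ β * |Real.log (w x)| := by
        rw [norm_mul, Real.norm_eq_abs, Real.norm_eq_abs,
          abs_of_nonneg (Real.rpow_nonneg (hw_nonneg x) β)]
      rw [hrw]
      calc w x ^ β * |Real.log (w x)|
          ≤ max (w x ^ a) (w x ^ b) * |Real.log (w x)| :=
            mul_le_mul_of_nonneg_right (pow_le x h0 β hβ) (abs_nonneg _)
        _ ≤ max (g₁ x) 0 := by
            rcases max_cases (w x ^ a) (w x ^ b) with ⟨he, _⟩ | ⟨he, _⟩ <;> rw [he]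
            · exact le_max_of_le_left (hxa h0)
            · exact le_max_of_le_left (hxb h0)
  have hbound₂ : ∀ᵐ x ∂μ, ∀ β ∈ Metric.ball β₀ δ,
      ‖w x ^ β * Real.log (w x) ^ 2‖ ≤ max (g₂ x) 0 := by
    filter_upwards [hdom₂ a haε, hdom₂ b hbε] with x hxa hxb β hβ
    rcases (hw_nonneg x).eq_or_lt with h0 | h0
    · rw [← h0, Real.zero_rpow (hball_pos β hβ).ne', zero_mul, norm_zero]
      exact le_max_right _ _
    · have hrw : ‖w x ^ β * Real.log (w x) ^ 2‖ = w x ^ β * Real.log (w x) ^ 2 := by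
        rw [Real.norm_eq_abs, abs_of_nonneg
          (mul_nonneg (Real.rpow_nonneg (hw_nonneg x) β) (sq_nonneg _))]
      rw [hrw]
      calc w x ^ β * Real.log (w x) ^ 2
          ≤ max (w x ^ a) (w x ^ b) * Real.log (w x) ^ 2 :=
            mul_le_mul_of_nonneg_right (pow_le x h0 β hβ) (sq_nonneg _)
        _ ≤ max (g₂ x) 0 := by
            rcases max_cases (w x ^ a) (w x ^ b) with ⟨he, _⟩ | ⟨he, _⟩ <;> rw [he]
            · exact le_max_of_le_left (hxa h0)
            · exact le_max_of_le_left (hxb h0)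
  -- pointwise derivatives
  have hderiv₁ : ∀ x : Ω, ∀ β ∈ Metric.ball β₀ δ,
      HasDerivAt (fun β : ℝ => w x ^ β) (w x ^ β * Real.log (w x)) β := by
    intro x β hβ
    rcases (hw_nonneg x).eq_or_lt with h0 | h0
    · have hβne : β ≠ 0 := (hball_pos β hβ).ne'
      have hev : (fun β : ℝ => w x ^ β) =ᶠ[nhds β] fun _ => (0 : ℝ) := by
        filter_upwards [eventually_ne_nhds hβne] with t ht
        rw [← h0, Real.zero_rpow ht]
      have := (hasDerivAt_const β (0 : ℝ)).congr_of_eventuallyEq hev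
      simpa [← h0, Real.zero_rpow hβne] using this
    · exact (Real.hasStrictDerivAt_const_rpow h0 β).hasDerivAt
  have hderiv₂ : ∀ x : Ω, ∀ β ∈ Metric.ball β₀ δ,
      HasDerivAt (fun β : ℝ => w x ^ β * Real.log (w x))
        (w x ^ β * Real.log (w x) ^ 2) β := by
    intro x β hβ
    rcases (hw_nonneg x).eq_or_lt with h0 | h0
    · simpa [← h0] using hasDerivAt_const β (0 : ℝ)
    · have h := ((Real.hasStrictDerivAt_const_rpow h0 β).hasDerivAt).mul_const
        (Real.log (w x))
      exact h.congr_deriv (by ring)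
  -- integrability of w^β₀
  have hInt0 : Integrable (fun x => w x ^ β₀) μ := by
    refine Integrable.mono' ((integrable_const (1 : ℝ)).add hw_intg)
      (hmeas_pow β₀ hβ₀pos.le).aestronglyMeasurable (ae_of_all _ fun x => ?_)
    rw [Real.norm_eq_abs, abs_of_nonneg (Real.rpow_nonneg (hw_nonneg x) _)]
    rcases le_total (w x) 1 with h1 | h1
    · have h := Real.rpow_le_one (hw_nonneg x) h1 hβ₀pos.le
      have := hw_nonneg x
      simp only [Pi.add_apply]
      linarith
    · have h : w x ^ β₀ ≤ w x ^ (1 : ℝ) :=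
        Real.rpow_le_rpow_of_exponent_le h1 hβ₀lt.le
      rw [Real.rpow_one] at h
      simp only [Pi.add_apply]
      linarith
  -- first differentiation under the integral: Z
  have hmeasF : ∀ᶠ β in nhds β₀, AEStronglyMeasurable (fun x => w x ^ β) μ := by
    filter_upwards [Metric.ball_mem_nhds β₀ hδpos] with β hβ
    exact (hmeas_pow β (hball_pos β hβ).le).aestronglyMeasurable
  have hZd := hasDerivAt_integral_of_dominated_loc_of_deriv_le
    (F := fun β x => w x ^ β) (F' := fun β x => w x ^ β * Real.log (w x))
    (bound := fun x => max (g₁ x) 0) (Metric.ball_mem_nhds β₀ hδpos) hmeasF hInt0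
    (hmeas1 β₀ hβ₀pos.le).aestronglyMeasurable hbound₁ hg₁.pos_part
    (ae_of_all _ hderiv₁)
  -- second differentiation under the integral: N₁
  have hmeasF1 : ∀ᶠ β in nhds β₀,
      AEStronglyMeasurable (fun x => w x ^ β * Real.log (w x)) μ := by
    filter_upwards [Metric.ball_mem_nhds β₀ hδpos] with β hβ
    exact (hmeas1 β (hball_pos β hβ).le).aestronglyMeasurable
  have hNd := hasDerivAt_integral_of_dominated_loc_of_deriv_le
    (F := fun β x => w x ^ β * Real.log (w x))
    (F' := fun β x => w x ^ β * Real.log (w x) ^ 2)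
    (bound := fun x => max (g₂ x) 0) (Metric.ball_mem_nhds β₀ hδpos) hmeasF1 hZd.1
    (hmeas2 β₀ hβ₀pos.le).aestronglyMeasurable hbound₂ hg₂.pos_part
    (ae_of_all _ hderiv₂)
  -- positivity of Z β₀
  have hZnonneg : ∀ β : ℝ, 0 ≤ Z μ w β := fun β =>
    integral_nonneg fun x => Real.rpow_nonneg (hw_nonneg x) β
  have hZ0 : 0 < Z μ w β₀ := by
    rcases (hZnonneg β₀).lt_or_eq with h | h
    · exact h
    · exfalso
      have hzero : (fun x => w x ^ β₀) =ᵐ[μ] 0 :=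
        (integral_eq_zero_iff_of_nonneg
          (fun x => Real.rpow_nonneg (hw_nonneg x) β₀) hInt0).mp h.symm
      have hw0 : w =ᵐ[μ] 0 := by
        filter_upwards [hzero] with x hx
        by_contra hne
        have hpos : 0 < w x := lt_of_le_of_ne (hw_nonneg x) (Ne.symm hne)
        have := Real.rpow_pos_of_pos hpos β₀
        simp only [Pi.zero_apply] at hx
        linarith
      rw [integral_congr_ae hw0] at hw_int
      simp at hw_int
  have hZne : Z μ w β₀ ≠ 0 := hZ0.ne'
  -- computing integrals with respect to temper
  have htemper : ∀ (β : ℝ) (h : Ω → ℝ), 0 ≤ β →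
      ∫ x, h x ∂(temper μ w β) = (∫ x, w x ^ β * h x ∂μ) / Z μ w β := by
    intro β h hβ
    have fmeas : Measurable fun x => Real.toNNReal (w x ^ β / Z μ w β) :=
      ((hmeas_pow β hβ).div_const _).real_toNNReal
    rw [temper]
    have hd : (fun x => ENNReal.ofReal (w x ^ β / Z μ w β))
        = fun x => ((Real.toNNReal (w x ^ β / Z μ w β) : ℝ≥0) : ℝ≥0∞) := rfl
    rw [hd, integral_withDensity_eq_integral_smul fmeas]
    have hpt : (fun x => (Real.toNNReal (w x ^ β / Z μ w β) : ℝ≥0) • h x)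
        = fun x => (Z μ w β)⁻¹ * (w x ^ β * h x) := by
      funext x
      rw [NNReal.smul_def, smul_eq_mul, Real.coe_toNNReal _
        (div_nonneg (Real.rpow_nonneg (hw_nonneg x) β) (hZnonneg β))]
      ring
    rw [hpt, integral_const_mul, div_eq_inv_mul]
  set N₁ := ∫ x, w x ^ β₀ * Real.log (w x) ∂μ with hN₁def
  set N₂ := ∫ x, w x ^ β₀ * Real.log (w x) ^ 2 ∂μ with hN₂def
  have hval₁ : ∫ x, Real.log (w x) ∂(temper μ w β₀) = N₁ / Z μ w β₀ :=
    htemper β₀ _ hβ₀pos.le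
  have hval₂ : ∫ x, Real.log (w x) ^ 2 ∂(temper μ w β₀) = N₂ / Z μ w β₀ :=
    htemper β₀ _ hβ₀pos.le
  -- quotient rule
  have hDiv : HasDerivAt
      (fun β => (∫ x, w x ^ β * Real.log (w x) ∂μ) / (∫ x, w x ^ β ∂μ))
      ((N₂ * (∫ x, w x ^ β₀ ∂μ) - N₁ * N₁) / (∫ x, w x ^ β₀ ∂μ) ^ 2) β₀ :=
    hNd.2.div hZd.2 hZne
  have hfun : (fun β => ∫ x, Real.log (w x) ∂(temper μ w β)) =ᶠ[nhds β₀]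
      (fun β => (∫ x, w x ^ β * Real.log (w x) ∂μ) / (∫ x, w x ^ β ∂μ)) := by
    filter_upwards [Metric.ball_mem_nhds β₀ hδpos] with β hβ
    exact htemper β _ (hball_pos β hβ).le
  -- Cauchy–Schwarz / variance nonnegativity
  have hInt1 : Integrable (fun x => w x ^ β₀ * Real.log (w x)) μ := hZd.1
  have hInt2 : Integrable (fun x => w x ^ β₀ * Real.log (w x) ^ 2) μ := hNd.1
  have key : N₁ ^ 2 ≤ N₂ * Z μ w β₀ := by
    set c := Z μ w β₀ with hc
    have hexp : (fun x => w x ^ β₀ * (c * Real.log (w x) - N₁) ^ 2)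
        = fun x => c ^ 2 * (w x ^ β₀ * Real.log (w x) ^ 2)
          - 2 * c * N₁ * (w x ^ β₀ * Real.log (w x)) + N₁ ^ 2 * (w x ^ β₀) := by
      funext x; ring
    have h0 : 0 ≤ ∫ x, w x ^ β₀ * (c * Real.log (w x) - N₁) ^ 2 ∂μ :=
      integral_nonneg fun x =>
        mul_nonneg (Real.rpow_nonneg (hw_nonneg x) _) (sq_nonneg _)
    have hintA : Integrable (fun x => c ^ 2 * (w x ^ β₀ * Real.log (w x) ^ 2)) μ :=
      hInt2.const_mul _
    have hintB : Integrable (fun x => 2 * c * N₁ * (w x ^ β₀ * Real.log (w x))) μ :=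
      hInt1.const_mul _
    have hintC : Integrable (fun x => N₁ ^ 2 * (w x ^ β₀)) μ := hInt0.const_mul _
    have hintAB : Integrable (fun x => c ^ 2 * (w x ^ β₀ * Real.log (w x) ^ 2)
        - 2 * c * N₁ * (w x ^ β₀ * Real.log (w x))) μ := hintA.sub hintB
    rw [hexp, integral_add hintAB hintC, integral_sub hintA hintB,
      integral_const_mul, integral_const_mul, integral_const_mul] at h0
    have e1 : (∫ (y : Ω), w y ^ β₀ * Real.log (w y) ∂μ) = N₁ := rfl
    have e2 : (∫ (y : Ω), w y ^ β₀ * Real.log (w y) ^ 2 ∂μ) = N₂ := rfl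
    have e3 : (∫ (y : Ω), w y ^ β₀ ∂μ) = c := rfl
    rw [e1, e2, e3] at h0
    nlinarith [hZ0, sq_nonneg N₁]
  have hvar : 0 ≤ N₂ / Z μ w β₀ - (N₁ / Z μ w β₀) ^ 2 := by
    have heq : N₂ / Z μ w β₀ - (N₁ / Z μ w β₀) ^ 2
        = (N₂ * Z μ w β₀ - N₁ ^ 2) / Z μ w β₀ ^ 2 := by
      field_simp
    rw [heq]
    exact div_nonneg (by linarith) (sq_nonneg _)
  constructor
  · rw [hval₁, hval₂]
    refine HasDerivAt.congr_of_eventuallyEq ?_ hfun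
    refine hDiv.congr_deriv ?_
    have hZeq : (∫ x, w x ^ β₀ ∂μ) = Z μ w β₀ := rfl
    rw [hZeq]
    field_simp
  · rw [hval₁, hval₂]
    exact hvar
end

section
/- (Symmetrized-KL identity for intermediate distributions.) Assume D_KL(p ‖ μ) < ∞ and let β ∈ [0,1] be such that w^β·|log w| is μ-integrable on {w > 0}. Then D_KL(p ‖ p_β) + D_KL(p_β ‖ p) = (1 − β)·( D_KL(p ‖ μ) − Z(β)^{-1} ∫_{w>0} w^β·log w dμ ); i.e. the symmetrized KL divergence between the posterior and the intermediate distribution p_β equals (1−β) times the gap between the posterior mean and the p_β-mean of log w. -/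
open MeasureTheory Real

variable {Ω : Type*} [MeasurableSpace Ω]

/-- Kullback–Leibler divergence between two measures given by their densities
`f` and `g` with respect to a common reference measure `μ`:
`D_KL = ∫ f · log (f / g) dμ`. -/
noncomputable def klDiv (μ : Measure Ω) (f g : Ω → ℝ) : ℝ :=
  ∫ x, f x * Real.log (f x / g x) ∂μ

/-- **Symmetrized-KL identity for intermediate distributions.**
If `D_KL(p ‖ μ) = ∫ w log w dμ < ∞` and `β ∈ [0,1]` with `w^β·|log w|`
`μ`-integrable on `{w > 0}`, then
`D_KL(p ‖ p_β) + D_KL(p_β ‖ p) = (1 − β)·(D_KL(p ‖ μ) − Z(β)⁻¹ ∫_{w>0} w^β·log w dμ)`. -/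
theorem symmetrized_kl_identity
    (μ : Measure Ω) [IsProbabilityMeasure μ]
    (w : Ω → ℝ) (hw_meas : Measurable w) (hw_nonneg : ∀ x, 0 ≤ w x)
    (hw_int : ∫ x, w x ∂μ = 1)
    (hKL_fin : Integrable (fun x => w x * Real.log (w x)) μ)
    (β : ℝ) (hβ₀ : 0 ≤ β) (hβ₁ : β ≤ 1)
    (hI : IntegrableOn (fun x => w x ^ β * |Real.log (w x)|) {x | 0 < w x} μ) :
    klDiv μ w (fun x => w x ^ β / Z μ w β)
      + klDiv μ (fun x => w x ^ β / Z μ w β) w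
      = (1 - β) * ((∫ x, w x * Real.log (w x) ∂μ)
          - (Z μ w β)⁻¹ * ∫ x in {x | 0 < w x}, w x ^ β * Real.log (w x) ∂μ) := by
  classical
  set s : Set Ω := {x | 0 < w x} with hs_def
  have hs : MeasurableSet s := measurableSet_lt measurable_const hw_meas
  have h_int_w : Integrable w μ := by
    by_contra h
    rw [integral_undef h] at hw_int
    exact one_ne_zero hw_int.symm
  have hwβ_meas : Measurable fun x => w x ^ β :=
    (Real.continuous_rpow_const hβ₀).measurable.comp hw_meas
  have h_int_wβ : Integrable (fun x => w x ^ β) μ := by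
    refine Integrable.mono' (((integrable_const (1:ℝ)).add h_int_w :
        Integrable (fun x => 1 + w x) μ))
      hwβ_meas.aestronglyMeasurable (Filter.Eventually.of_forall fun x => ?_)
    have h0 := hw_nonneg x
    show ‖w x ^ β‖ ≤ 1 + w x
    rw [Real.norm_eq_abs, abs_of_nonneg (Real.rpow_nonneg h0 β)]
    rcases le_or_gt (w x) 1 with h1 | h1
    · have : w x ^ β ≤ 1 := Real.rpow_le_one h0 h1 hβ₀
      linarith
    · have : w x ^ β ≤ w x ^ (1:ℝ) := Real.rpow_le_rpow_of_exponent_le h1.le hβ₁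
      rw [Real.rpow_one] at this
      linarith
  have hsupp : 0 < μ (Function.support w) := by
    have h1 : (0:ℝ) < ∫ x, w x ∂μ := by rw [hw_int]; exact one_pos
    exact (integral_pos_iff_support_of_nonneg hw_nonneg h_int_w).mp h1
  have hZ_pos : 0 < Z μ w β := by
    rw [Z]
    refine (integral_pos_iff_support_of_nonneg
      (fun x => Real.rpow_nonneg (hw_nonneg x) β) h_int_wβ).mpr ?_
    refine lt_of_lt_of_le hsupp (measure_mono ?_)
    intro x hx
    exact (Real.rpow_pos_of_pos (lt_of_le_of_ne (hw_nonneg x) (Ne.symm hx)) β).ne'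
  have hf1 : (fun x => w x * Real.log (w x / (w x ^ β / Z μ w β)))
      = fun x => (1 - β) * (w x * Real.log (w x)) + Real.log (Z μ w β) * w x := by
    funext x
    rcases (hw_nonneg x).eq_or_lt with h0 | h0
    · simp [← h0]
    · have hwβ : 0 < w x ^ β := Real.rpow_pos_of_pos h0 β
      rw [Real.log_div h0.ne' (div_pos hwβ hZ_pos).ne',
          Real.log_div hwβ.ne' hZ_pos.ne', Real.log_rpow h0]
      ring
  have hkl1 : klDiv μ w (fun x => w x ^ β / Z μ w β)
      = (1 - β) * (∫ x, w x * Real.log (w x) ∂μ) + Real.log (Z μ w β) := by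
    simp only [klDiv]
    rw [hf1, integral_add (hKL_fin.const_mul _) (h_int_w.const_mul _),
        integral_const_mul, integral_const_mul, hw_int, mul_one]
  have hf2 : (fun x => (w x ^ β / Z μ w β) * Real.log ((w x ^ β / Z μ w β) / w x))
      = s.indicator (fun x => ((β - 1) / Z μ w β) * (w x ^ β * Real.log (w x))
          - (Real.log (Z μ w β) / Z μ w β) * (w x ^ β)) := by
    funext x
    by_cases hx : x ∈ s
    · have h0 : 0 < w x := hx
      have hwβ : 0 < w x ^ β := Real.rpow_pos_of_pos h0 β
      rw [Set.indicator_of_mem hx,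
          Real.log_div (div_pos hwβ hZ_pos).ne' h0.ne',
          Real.log_div hwβ.ne' hZ_pos.ne', Real.log_rpow h0]
      ring
    · have h0 : w x = 0 := le_antisymm (not_lt.mp hx) (hw_nonneg x)
      rw [Set.indicator_of_notMem hx, h0, div_zero, Real.log_zero, mul_zero]
  have hI' : IntegrableOn (fun x => w x ^ β * Real.log (w x)) s μ := by
    refine hI.mono' ((hwβ_meas.mul hw_meas.log).aestronglyMeasurable.restrict)
      (Filter.Eventually.of_forall fun x => ?_)
    rw [Real.norm_eq_abs, abs_mul, abs_of_nonneg (Real.rpow_nonneg (hw_nonneg x) β)]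
  have hJ' : IntegrableOn (fun x => w x ^ β) s μ := h_int_wβ.integrableOn
  have hkl2 : klDiv μ (fun x => w x ^ β / Z μ w β) w
      = ((β - 1) / Z μ w β) * (∫ x in s, w x ^ β * Real.log (w x) ∂μ)
        - (Real.log (Z μ w β) / Z μ w β) * (∫ x in s, w x ^ β ∂μ) := by
    simp only [klDiv]
    rw [hf2, integral_indicator hs,
        integral_sub (hI'.const_mul _) (hJ'.const_mul _),
        integral_const_mul, integral_const_mul]
  have hlogZ : Real.log (Z μ w β)
      - (Real.log (Z μ w β) / Z μ w β) * (∫ x in s, w x ^ β ∂μ) = 0 := by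
    rcases eq_or_lt_of_le hβ₀ with hβ | hβ
    · have hZ1 : Z μ w β = 1 := by
        simp [Z, ← hβ, Real.rpow_zero]
      simp [hZ1]
    · have hJZ : (∫ x in s, w x ^ β ∂μ) = Z μ w β := by
        rw [Z]
        have hind : (fun x => w x ^ β) = s.indicator (fun x => w x ^ β) := by
          funext x
          by_cases hx : x ∈ s
          · rw [Set.indicator_of_mem hx]
          · have h0 : w x = 0 := le_antisymm (not_lt.mp hx) (hw_nonneg x)
            rw [Set.indicator_of_notMem hx, h0, Real.zero_rpow hβ.ne']
        conv_rhs => rw [hind]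
        rw [integral_indicator hs]
      rw [hJZ]
      field_simp
      ring
  rw [hkl1, hkl2]
  have hZne : Z μ w β ≠ 0 := hZ_pos.ne'
  field_simp at hlogZ ⊢
  linarith [hlogZ]
end

section
/- (Lemma B.2: monotonically increasing coefficient of variation.) For β ≥ 0 with Z(2β) < ∞, the coefficient of variation of the importance weights w^β under μ is κ(β) = sqrt( Z(2β) − Z(β)² ) / Z(β), and it satisfies 1 + κ(β)² = Z(2β)/Z(β)². For all 0 ≤ β₁ ≤ β₂ such that w^{2β₂} is μ-integrable, one has Z(2β₁)/Z(β₁)² ≤ Z(2β₂)/Z(β₂)², and hence κ(β₁) ≤ κ(β₂): the coefficient of variation of the tempering weights is monotonically nondecreasing in β. -/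
open MeasureTheory Real
open scoped ENNReal

variable {Ω : Type*} [MeasurableSpace Ω]

private lemma Z_nonneg (μ : Measure Ω) (w : Ω → ℝ) (h0 : ∀ x, 0 ≤ w x) (β : ℝ) :
    0 ≤ Z μ w β :=
  integral_nonneg fun x => Real.rpow_nonneg (h0 x) β

private lemma Z_zero (μ : Measure Ω) [IsProbabilityMeasure μ] (w : Ω → ℝ) :
    Z μ w 0 = 1 := by
  simp [Z]

private lemma Z_integrable (μ : Measure Ω) [IsProbabilityMeasure μ]
    (w : Ω → ℝ) (hm : Measurable w) (h0 : ∀ x, 0 ≤ w x) {β c : ℝ}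
    (hβ : 0 ≤ β) (hβc : β ≤ c) (hc : Integrable (fun x => w x ^ c) μ) :
    Integrable (fun x => w x ^ β) μ := by
  refine ((integrable_const (1:ℝ)).add hc).mono'
    (((Real.continuous_rpow_const hβ).measurable.comp hm).aestronglyMeasurable) (ae_of_all _ fun x => ?_)
  rw [Real.norm_of_nonneg (Real.rpow_nonneg (h0 x) β)]
  rcases le_total (w x) 1 with h | h
  · have : w x ^ β ≤ 1 := Real.rpow_le_one (h0 x) h hβ
    have h2 : (0:ℝ) ≤ w x ^ c := Real.rpow_nonneg (h0 x) c
    simp only [Pi.add_apply]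
    linarith
  · have : w x ^ β ≤ w x ^ c := Real.rpow_le_rpow_of_exponent_le h hβc
    simp only [Pi.add_apply]
    linarith

private lemma Z_pos (μ : Measure Ω) [IsProbabilityMeasure μ]
    (w : Ω → ℝ) (hm : Measurable w) (h0 : ∀ x, 0 ≤ w x)
    (hw_int : ∫ x, w x ∂μ = 1) {β : ℝ} (hβ : 0 ≤ β)
    (hi : Integrable (fun x => w x ^ β) μ) : 0 < Z μ w β := by
  rcases eq_or_lt_of_le hβ with rfl | hβ'
  · rw [Z_zero]; norm_num
  · have hwint : Integrable w μ := by
      by_contra h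
      rw [integral_undef h] at hw_int; norm_num at hw_int
    have hsupp : 0 < μ (Function.support w) := by
      rw [← integral_pos_iff_support_of_nonneg h0 hwint, hw_int]; norm_num
    rw [Z, integral_pos_iff_support_of_nonneg (fun x => Real.rpow_nonneg (h0 x) β) hi]
    have : Function.support (fun x => w x ^ β) = Function.support w := by
      ext x
      simp [Function.support, Real.rpow_eq_zero (h0 x) (ne_of_gt hβ')]
    rwa [this]

private lemma Z_logconvex (μ : Measure Ω) [IsProbabilityMeasure μ]
    (w : Ω → ℝ) (hm : Measurable w) (h0 : ∀ x, 0 ≤ w x) {a b c θ : ℝ}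
    (ha : 0 ≤ a) (hb : 0 ≤ b) (hθ0 : 0 ≤ θ) (hθ1 : θ ≤ 1)
    (hc : c = θ * a + (1 - θ) * b)
    (hia : Integrable (fun x => w x ^ a) μ) (hib : Integrable (fun x => w x ^ b) μ)
    (hic : Integrable (fun x => w x ^ c) μ) :
    Z μ w c ≤ Z μ w a ^ θ * Z μ w b ^ (1 - θ) := by
  rcases eq_or_lt_of_le hθ0 with rfl | hθ0'
  · norm_num at hc
    rw [hc]
    norm_num
  rcases eq_or_lt_of_le hθ1 with rfl | hθ1'
  · norm_num at hc
    rw [hc]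
    norm_num
  -- now 0 < θ < 1
  have hc0 : 0 ≤ c := by
    rw [hc]
    have h1 := mul_nonneg hθ0 ha
    have h2 := mul_nonneg (by linarith : (0:ℝ) ≤ 1 - θ) hb
    linarith
  set W : Ω → ℝ≥0∞ := fun x => ENNReal.ofReal (w x) with hW
  have hWm : Measurable W := ENNReal.measurable_ofReal.comp hm
  have key : ∀ {β : ℝ}, 0 ≤ β → Integrable (fun x => w x ^ β) μ →
      (∫⁻ x, W x ^ β ∂μ) = ENNReal.ofReal (Z μ w β) := by
    intro β hβ hi
    rw [Z, ofReal_integral_eq_lintegral_ofReal hi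
      (ae_of_all _ fun x => Real.rpow_nonneg (h0 x) β)]
    refine lintegral_congr fun x => ?_
    rw [ENNReal.ofReal_rpow_of_nonneg (h0 x) hβ]
  have hpq : Real.HolderConjugate (1/θ) (1/(1-θ)) := by
    rw [Real.holderConjugate_iff]
    constructor
    · rw [lt_div_iff₀ hθ0']; linarith
    · simp only [one_div, inv_inv]; ring
  have holder := ENNReal.lintegral_mul_le_Lp_mul_Lq μ hpq
    (f := fun x => W x ^ (θ * a)) (g := fun x => W x ^ ((1 - θ) * b))
    ((ENNReal.continuous_rpow_const.measurable.comp hWm).aemeasurable)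
    ((ENNReal.continuous_rpow_const.measurable.comp hWm).aemeasurable)
  have e1 : ∀ x, W x ^ (θ * a) * W x ^ ((1 - θ) * b) = W x ^ c := by
    intro x
    rw [hc, ENNReal.rpow_add_of_nonneg _ _ (mul_nonneg hθ0 ha) (mul_nonneg (by linarith) hb)]
  have e2 : ∀ x, (W x ^ (θ * a)) ^ (1/θ) = W x ^ a := by
    intro x
    rw [← ENNReal.rpow_mul]
    congr 1
    field_simp
  have e3 : ∀ x, (W x ^ ((1 - θ) * b)) ^ (1/(1-θ)) = W x ^ b := by
    intro x
    rw [← ENNReal.rpow_mul]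
    congr 1
    have : (1:ℝ) - θ ≠ 0 := by linarith
    field_simp
  simp only [Pi.mul_apply] at holder
  rw [lintegral_congr e1] at holder
  simp only [e2, e3] at holder
  rw [one_div_one_div, one_div_one_div] at holder
  rw [key hc0 hic, key ha hia, key hb hib] at holder
  rw [ENNReal.ofReal_rpow_of_nonneg (Z_nonneg μ w h0 a) hθ0,
    ENNReal.ofReal_rpow_of_nonneg (Z_nonneg μ w h0 b) (by linarith),
    ← ENNReal.ofReal_mul (Real.rpow_nonneg (Z_nonneg μ w h0 a) θ)] at holder
  exact (ENNReal.ofReal_le_ofReal_iff (mul_nonneg (Real.rpow_nonneg (Z_nonneg μ w h0 a) θ) (Real.rpow_nonneg (Z_nonneg μ w h0 b) (1-θ)))).mp holder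

/-- The coefficient of variation of the tempering weights `w^β` under `μ`:
standard deviation divided by mean, `κ(β) = sqrt(Z(2β) − Z(β)²) / Z(β)`. -/
noncomputable def kappa (μ : Measure Ω) (w : Ω → ℝ) (β : ℝ) : ℝ :=
  Real.sqrt (Z μ w (2 * β) - Z μ w β ^ 2) / Z μ w β

/-- **Lemma B.2 (monotonically increasing coefficient of variation).**
For `β ≥ 0` with `Z(2β) < ∞`, the coefficient of variation
`κ(β) = sqrt(Z(2β) − Z(β)²)/Z(β)` satisfies `1 + κ(β)² = Z(2β)/Z(β)²`; and for
all `0 ≤ β₁ ≤ β₂` with `w^(2β₂)` `μ`-integrable, `Z(2β₁)/Z(β₁)² ≤ Z(2β₂)/Z(β₂)²`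
and hence `κ(β₁) ≤ κ(β₂)`. -/
theorem cov_monotone
    (μ : Measure Ω) [IsProbabilityMeasure μ]
    (w : Ω → ℝ) (hw_meas : Measurable w) (hw_nonneg : ∀ x, 0 ≤ w x)
    (hw_int : ∫ x, w x ∂μ = 1) :
    (∀ β : ℝ, 0 ≤ β → Integrable (fun x => w x ^ (2 * β)) μ →
      1 + kappa μ w β ^ 2 = Z μ w (2 * β) / Z μ w β ^ 2) ∧
    (∀ β₁ β₂ : ℝ, 0 ≤ β₁ → β₁ ≤ β₂ → Integrable (fun x => w x ^ (2 * β₂)) μ →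
      Z μ w (2 * β₁) / Z μ w β₁ ^ 2 ≤ Z μ w (2 * β₂) / Z μ w β₂ ^ 2
        ∧ kappa μ w β₁ ≤ kappa μ w β₂) := by
  have hi0 : Integrable (fun x => w x ^ (0:ℝ)) μ := by
    simpa [Real.rpow_zero] using (integrable_const (1:ℝ) : Integrable (fun _ : Ω => (1:ℝ)) μ)
  have hCS : ∀ β : ℝ, 0 ≤ β → Integrable (fun x => w x ^ (2 * β)) μ →
      Z μ w β ^ 2 ≤ Z μ w (2 * β) := by
    intro β hβ hi2
    have hiβ : Integrable (fun x => w x ^ β) μ :=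
      Z_integrable μ w hw_meas hw_nonneg hβ (by linarith) hi2
    have h := Z_logconvex μ w hw_meas hw_nonneg (le_refl (0:ℝ)) (by linarith : (0:ℝ) ≤ 2 * β)
      (by norm_num : (0:ℝ) ≤ 1/2) (by norm_num : (1:ℝ)/2 ≤ 1)
      (show β = (1/2) * 0 + (1 - 1/2) * (2 * β) by ring) hi0 hi2 hiβ
    rw [Z_zero, Real.one_rpow, one_mul] at h
    have h2 : Z μ w β ^ 2 ≤ (Z μ w (2 * β) ^ ((1:ℝ) - 1/2)) ^ 2 :=
      pow_le_pow_left₀ (Z_nonneg μ w hw_nonneg β) h 2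
    calc Z μ w β ^ 2 ≤ (Z μ w (2 * β) ^ ((1:ℝ) - 1/2)) ^ 2 := h2
      _ = Z μ w (2 * β) := by
        rw [← Real.rpow_natCast (Z μ w (2*β) ^ ((1:ℝ) - 1/2)) 2,
          ← Real.rpow_mul (Z_nonneg μ w hw_nonneg (2*β))]
        norm_num
  have key1 : ∀ β : ℝ, 0 ≤ β → Integrable (fun x => w x ^ (2 * β)) μ →
      1 + kappa μ w β ^ 2 = Z μ w (2 * β) / Z μ w β ^ 2 := by
    intro β hβ hi2
    have hiβ : Integrable (fun x => w x ^ β) μ :=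
      Z_integrable μ w hw_meas hw_nonneg hβ (by linarith) hi2
    have hZ := Z_pos μ w hw_meas hw_nonneg hw_int hβ hiβ
    have hcs := hCS β hβ hi2
    rw [kappa, div_pow, Real.sq_sqrt (by linarith)]
    field_simp
    ring
  refine ⟨key1, ?_⟩
  intro β₁ β₂ h1 h12 hi22
  have hβ₂ : 0 ≤ β₂ := le_trans h1 h12
  have hiβ₁ : Integrable (fun x => w x ^ β₁) μ :=
    Z_integrable μ w hw_meas hw_nonneg h1 (by linarith) hi22
  have hi21 : Integrable (fun x => w x ^ (2 * β₁)) μ :=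
    Z_integrable μ w hw_meas hw_nonneg (by linarith) (by linarith) hi22
  have hiβ₂ : Integrable (fun x => w x ^ β₂) μ :=
    Z_integrable μ w hw_meas hw_nonneg hβ₂ (by linarith) hi22
  have hZ1 := Z_pos μ w hw_meas hw_nonneg hw_int h1 hiβ₁
  have hZ2 := Z_pos μ w hw_meas hw_nonneg hw_int hβ₂ hiβ₂
  have hZ21 := Z_pos μ w hw_meas hw_nonneg hw_int (by linarith : (0:ℝ) ≤ 2*β₁) hi21
  have hZ22 := Z_pos μ w hw_meas hw_nonneg hw_int (by linarith : (0:ℝ) ≤ 2*β₂) hi22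
  have main : Z μ w (2*β₁) * Z μ w β₂ ^ 2 ≤ Z μ w (2*β₂) * Z μ w β₁ ^ 2 := by
    rcases eq_or_lt_of_le hβ₂ with hb0 | hb2pos
    · have hb1 : β₁ = 0 := le_antisymm (hb0 ▸ h12) h1
      rw [hb1, ← hb0]
    · set D := 2*β₂ - β₁ with hD_def
      have hD : 0 < D := by simp only [hD_def]; linarith
      set θ' := (2*β₂ - 2*β₁)/D with hθ'_def
      set l := β₂/D with hl_def
      have hθ'0 : 0 ≤ θ' := div_nonneg (by linarith) hD.le
      have hθ'1 : θ' ≤ 1 := (div_le_one hD).mpr (by linarith)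
      have hl0 : 0 ≤ l := div_nonneg hβ₂ hD.le
      have hl1 : l ≤ 1 := (div_le_one hD).mpr (by linarith)
      have hA := Z_logconvex μ w hw_meas hw_nonneg h1 (by linarith : (0:ℝ) ≤ 2*β₂) hθ'0 hθ'1
        (show 2*β₁ = θ' * β₁ + (1-θ') * (2*β₂) by
          rw [hθ'_def]; field_simp; ring) hiβ₁ hi22 hi21
      have hB := Z_logconvex μ w hw_meas hw_nonneg h1 (by linarith : (0:ℝ) ≤ 2*β₂) hl0 hl1
        (show β₂ = l * β₁ + (1-l) * (2*β₂) by
          rw [hl_def]; field_simp; ring) hiβ₁ hi22 hiβ₂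
      have hsum1 : θ' + l * 2 = 2 := by
        rw [hθ'_def, hl_def]; field_simp; ring
      have hsum2 : (1-θ') + (1-l) * 2 = 1 := by
        rw [hθ'_def, hl_def]; field_simp; ring
      set x := Z μ w β₁ with hx
      set y := Z μ w (2*β₂) with hy
      calc Z μ w (2*β₁) * Z μ w β₂ ^ 2
          ≤ (x ^ θ' * y ^ (1-θ')) * (x ^ l * y ^ (1-l)) ^ 2 :=
            mul_le_mul hA (pow_le_pow_left₀ hZ2.le hB 2) (by positivity)
              (by positivity)
        _ = x ^ (θ' + l * 2) * y ^ ((1-θ') + (1-l) * 2) := by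
            rw [mul_pow, ← Real.rpow_natCast (x ^ l) 2, ← Real.rpow_natCast (y ^ (1-l)) 2,
              ← Real.rpow_mul hZ1.le, ← Real.rpow_mul hZ22.le,
              Real.rpow_add hZ1, Real.rpow_add hZ22]
            push_cast
            ring
        _ = Z μ w (2*β₂) * Z μ w β₁ ^ 2 := by
            rw [hsum1, hsum2, Real.rpow_one,
              show (2:ℝ) = ((2:ℕ):ℝ) by norm_num, Real.rpow_natCast]
            exact mul_comm _ _
  have hdiv : Z μ w (2 * β₁) / Z μ w β₁ ^ 2 ≤ Z μ w (2 * β₂) / Z μ w β₂ ^ 2 :=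
    (div_le_div_iff₀ (by positivity) (by positivity)).mpr main
  refine ⟨hdiv, ?_⟩
  have e : ∀ β : ℝ, 0 < Z μ w β →
      kappa μ w β = Real.sqrt (Z μ w (2*β) / Z μ w β ^ 2 - 1) := by
    intro β hZ
    rw [kappa, show Z μ w (2*β) / Z μ w β ^ 2 - 1
        = (Z μ w (2*β) - Z μ w β ^ 2) / Z μ w β ^ 2 by field_simp,
      Real.sqrt_div' _ (by positivity), Real.sqrt_sq hZ.le]
  rw [e β₁ hZ1, e β₂ hZ2]
  exact Real.sqrt_le_sqrt (by linarith)
end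

section
/- (Derivative formula for the coefficient of variation in Lemma B.2.) Let β₀ > 0 with κ(β₀) > 0, and suppose there exist ε > 0 and a μ-integrable function g such that w^β ≤ g and w^β·|log w| ≤ g μ-almost everywhere on {w > 0} for all β with |β − β₀| ≤ ε and for all β with |β − 2β₀| ≤ 2ε. Then κ(β) = sqrt( Z(2β) − Z(β)² )/Z(β) is differentiable at β₀ with κ′(β₀) = ((1 + κ(β₀)²)/κ(β₀)) · ( ∫ log w dp_{2β₀} − ∫ log w dp_{β₀} ), and κ′(β₀) ≥ 0. -/
open MeasureTheory Real
open scoped ENNReal NNReal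

variable {Ω : Type*} [MeasurableSpace Ω]

section AuxLemmas

lemma meas_rpow_aux {w : Ω → ℝ} (hw : Measurable w) {c : ℝ} (hc : 0 ≤ c) :
    Measurable fun x => w x ^ c :=
  (Real.continuous_rpow_const hc).measurable.comp hw

/-- Integrability of `w^γ` from the domination hypothesis at `γ`. -/
lemma integrable_rpow_aux (μ : Measure Ω) {w : Ω → ℝ} (hw_meas : Measurable w)
    (hw_nonneg : ∀ x, 0 ≤ w x) {γ : ℝ} (hγ : 0 < γ) {g : Ω → ℝ} (hg : Integrable g μ)
    (hdom : ∀ᵐ x ∂μ, 0 < w x → w x ^ γ ≤ g x) :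
    Integrable (fun x => w x ^ γ) μ := by
  refine hg.abs.mono (meas_rpow_aux hw_meas hγ.le).aestronglyMeasurable ?_
  filter_upwards [hdom] with x hx
  simp only [Real.norm_eq_abs, abs_abs]
  rcases (hw_nonneg x).lt_or_eq with hpos | h0
  · rw [abs_of_nonneg (Real.rpow_nonneg (hw_nonneg x) _)]
    exact (hx hpos).trans (le_abs_self _)
  · rw [← h0, Real.zero_rpow hγ.ne', abs_zero]
    exact abs_nonneg _

/-- Differentiation under the integral sign for `Z`. -/
lemma hasDerivAt_Z_aux (μ : Measure Ω) [IsProbabilityMeasure μ]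
    {w : Ω → ℝ} (hw_meas : Measurable w) (hw_nonneg : ∀ x, 0 ≤ w x)
    {γ δ : ℝ} (hγ : 0 < γ) (hδ : 0 < δ) (hδγ : δ < γ)
    {g : Ω → ℝ} (hg : Integrable g μ)
    (hdom : ∀ β : ℝ, |β - γ| ≤ δ → ∀ᵐ x ∂μ, 0 < w x →
      w x ^ β ≤ g x ∧ w x ^ β * |Real.log (w x)| ≤ g x) :
    Integrable (fun x => w x ^ γ * Real.log (w x)) μ ∧
      HasDerivAt (Z μ w) (∫ x, w x ^ γ * Real.log (w x) ∂μ) γ := by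
  have hγδpos : 0 < γ - δ := by linarith
  have habs1 : |γ - δ - γ| ≤ δ := by
    rw [show γ - δ - γ = -δ by ring, abs_neg, abs_of_nonneg hδ.le]
  have habs2 : |γ + δ - γ| ≤ δ := by
    rw [show γ + δ - γ = δ by ring, abs_of_nonneg hδ.le]
  have key := hasDerivAt_integral_of_dominated_loc_of_deriv_le
    (F := fun (β : ℝ) (x : Ω) => w x ^ β)
    (F' := fun (β : ℝ) (x : Ω) => w x ^ β * Real.log (w x))
    (bound := fun x => 2 * |g x|) (μ := μ) (x₀ := γ) (Metric.ball_mem_nhds γ hδ)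
    ?_ ?_ ?_ ?_ ?_ ?_
  · exact key
  · filter_upwards [eventually_gt_nhds hγ] with β hβ
    exact (meas_rpow_aux hw_meas hβ.le).aestronglyMeasurable
  · exact integrable_rpow_aux μ hw_meas hw_nonneg hγ hg
      ((hdom γ (by rw [sub_self, abs_zero]; exact hδ.le)).mono fun x hx h => (hx h).1)
  · exact ((meas_rpow_aux hw_meas hγ.le).mul hw_meas.log).aestronglyMeasurable
  · -- bound
    filter_upwards [hdom (γ - δ) habs1, hdom (γ + δ) habs2] with x h₁ h₂ β hβ
    rw [Metric.mem_ball, Real.dist_eq] at hβ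
    have hβbd := abs_lt.mp hβ
    rcases (hw_nonneg x).lt_or_eq with hpos | h0
    · obtain ⟨-, hb₁⟩ := h₁ hpos
      obtain ⟨-, hb₂⟩ := h₂ hpos
      have hmono : w x ^ β ≤ w x ^ (γ - δ) + w x ^ (γ + δ) := by
        rcases le_total (w x) 1 with hw1 | hw1
        · have h1 : w x ^ β ≤ w x ^ (γ - δ) :=
            Real.rpow_le_rpow_of_exponent_ge hpos hw1 (by linarith)
          have h2 : (0:ℝ) ≤ w x ^ (γ + δ) := Real.rpow_nonneg (hw_nonneg x) _
          linarith
        · have h1 : w x ^ β ≤ w x ^ (γ + δ) :=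
            Real.rpow_le_rpow_of_exponent_le hw1 (by linarith)
          have h2 : (0:ℝ) ≤ w x ^ (γ - δ) := Real.rpow_nonneg (hw_nonneg x) _
          linarith
      have habs : ‖w x ^ β * Real.log (w x)‖ = w x ^ β * |Real.log (w x)| := by
        rw [norm_mul, Real.norm_eq_abs, Real.norm_eq_abs,
          abs_of_nonneg (Real.rpow_nonneg (hw_nonneg x) _)]
      rw [habs]
      have hstep : w x ^ β * |Real.log (w x)| ≤
          (w x ^ (γ - δ) + w x ^ (γ + δ)) * |Real.log (w x)| :=
        mul_le_mul_of_nonneg_right hmono (abs_nonneg _)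
      have hfin : (w x ^ (γ - δ) + w x ^ (γ + δ)) * |Real.log (w x)| ≤ 2 * |g x| := by
        have e1 : w x ^ (γ - δ) * |Real.log (w x)| ≤ |g x| := hb₁.trans (le_abs_self _)
        have e2 : w x ^ (γ + δ) * |Real.log (w x)| ≤ |g x| := hb₂.trans (le_abs_self _)
        nlinarith [abs_nonneg (Real.log (w x))]
      linarith
    · have hβpos : 0 < β := by linarith
      simp only [← h0, Real.zero_rpow hβpos.ne', zero_mul, norm_zero]
      positivity
  · exact hg.abs.const_mul 2
  · -- differentiability
    refine Filter.Eventually.of_forall fun x β hβ => ?_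
    rw [Metric.mem_ball, Real.dist_eq] at hβ
    have hβbd := abs_lt.mp hβ
    have hβpos : 0 < β := by linarith
    rcases (hw_nonneg x).lt_or_eq with hpos | h0
    · exact (Real.hasStrictDerivAt_const_rpow hpos β).hasDerivAt
    · have hev : (fun t : ℝ => w x ^ t) =ᶠ[nhds β] fun _ => (0:ℝ) := by
        filter_upwards [eventually_ne_nhds hβpos.ne'] with t ht
        rw [← h0, Real.zero_rpow ht]
      have hd : HasDerivAt (fun t : ℝ => w x ^ t) 0 β :=
        (hasDerivAt_const β (0:ℝ)).congr_of_eventuallyEq hev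
      simpa [← h0, Real.zero_rpow hβpos.ne'] using hd

/-- Integral of `log w` with respect to the tempered measure. -/
lemma integral_log_temper_aux (μ : Measure Ω) {w : Ω → ℝ} (hw_meas : Measurable w)
    (hw_nonneg : ∀ x, 0 ≤ w x) {γ : ℝ} (hγ : 0 ≤ γ) (hZpos : 0 < Z μ w γ) :
    ∫ x, Real.log (w x) ∂(temper μ w γ)
      = (∫ x, w x ^ γ * Real.log (w x) ∂μ) / Z μ w γ := by
  have hmeas : Measurable fun x => (w x ^ γ / Z μ w γ).toNNReal :=
    ((meas_rpow_aux hw_meas hγ).div_const _).real_toNNReal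
  have htemper : temper μ w γ
      = μ.withDensity fun x => (((w x ^ γ / Z μ w γ).toNNReal : ℝ≥0) : ℝ≥0∞) := rfl
  rw [htemper, integral_withDensity_eq_integral_smul hmeas, ← integral_div]
  congr 1
  funext x
  have hnn : 0 ≤ w x ^ γ / Z μ w γ := div_nonneg (Real.rpow_nonneg (hw_nonneg x) _) hZpos.le
  rw [NNReal.smul_def, Real.coe_toNNReal _ hnn, smul_eq_mul]
  ring


/-- Chebyshev-type correlation inequality:
`(∫ w^β log w)(∫ w^{2β}) ≤ (∫ w^{2β} log w)(∫ w^β)`. -/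
lemma chebyshev_aux (μ : Measure Ω) [IsProbabilityMeasure μ] {w : Ω → ℝ}
    (hw_nonneg : ∀ x, 0 ≤ w x) {β₀ : ℝ} (hβ₀pos : 0 < β₀)
    (hIA : Integrable (fun x => w x ^ β₀) μ)
    (hIB : Integrable (fun x => w x ^ (2 * β₀)) μ)
    (hintA : Integrable (fun x => w x ^ β₀ * Real.log (w x)) μ)
    (hintB : Integrable (fun x => w x ^ (2 * β₀) * Real.log (w x)) μ) :
    (∫ x, w x ^ β₀ * Real.log (w x) ∂μ) * ∫ x, w x ^ (2 * β₀) ∂μ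
      ≤ (∫ x, w x ^ (2 * β₀) * Real.log (w x) ∂μ) * ∫ x, w x ^ β₀ ∂μ := by
  have hi1 : Integrable
      (fun z : Ω × Ω => (w z.1 ^ (2 * β₀) * Real.log (w z.1)) * w z.2 ^ β₀)
      (μ.prod μ) := hintB.mul_prod hIA
  have hi2 : Integrable
      (fun z : Ω × Ω => w z.1 ^ (2 * β₀) * (w z.2 ^ β₀ * Real.log (w z.2)))
      (μ.prod μ) := hIB.mul_prod hintA
  have hi3 : Integrable
      (fun z : Ω × Ω => (w z.1 ^ β₀ * Real.log (w z.1)) * w z.2 ^ (2 * β₀))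
      (μ.prod μ) := hintA.mul_prod hIB
  have hi4 : Integrable
      (fun z : Ω × Ω => w z.1 ^ β₀ * (w z.2 ^ (2 * β₀) * Real.log (w z.2)))
      (μ.prod μ) := hIA.mul_prod hintB
  have hrpow2 : ∀ v : ℝ, 0 ≤ v → v ^ (2 * β₀) = v ^ β₀ * v ^ β₀ := by
    intro v hv
    rcases hv.lt_or_eq with h | h
    · rw [← Real.rpow_add h, two_mul]
    · rw [← h, Real.zero_rpow hβ₀pos.ne',
        Real.zero_rpow (by positivity : (2 * β₀) ≠ 0)]
      ring
  have hpnonneg : ∀ z : Ω × Ω,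
      0 ≤ (w z.1 ^ (2 * β₀) * Real.log (w z.1)) * w z.2 ^ β₀
        - w z.1 ^ (2 * β₀) * (w z.2 ^ β₀ * Real.log (w z.2))
        - (w z.1 ^ β₀ * Real.log (w z.1)) * w z.2 ^ (2 * β₀)
        + w z.1 ^ β₀ * (w z.2 ^ (2 * β₀) * Real.log (w z.2)) := by
    intro z
    have hform : (w z.1 ^ (2 * β₀) * Real.log (w z.1)) * w z.2 ^ β₀
        - w z.1 ^ (2 * β₀) * (w z.2 ^ β₀ * Real.log (w z.2))
        - (w z.1 ^ β₀ * Real.log (w z.1)) * w z.2 ^ (2 * β₀)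
        + w z.1 ^ β₀ * (w z.2 ^ (2 * β₀) * Real.log (w z.2))
        = (w z.1 ^ β₀ - w z.2 ^ β₀) * (Real.log (w z.1) - Real.log (w z.2))
          * (w z.1 ^ β₀ * w z.2 ^ β₀) := by
      simp only [hrpow2 (w z.1) (hw_nonneg z.1), hrpow2 (w z.2) (hw_nonneg z.2)]
      ring
    rw [hform]
    rcases (hw_nonneg z.1).lt_or_eq with h1 | h1
    · rcases (hw_nonneg z.2).lt_or_eq with h2 | h2
      · have hmain : 0 ≤ (w z.1 ^ β₀ - w z.2 ^ β₀)
            * (Real.log (w z.1) - Real.log (w z.2)) := by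
          rcases le_total (w z.1) (w z.2) with hle | hle
          · have ha : w z.1 ^ β₀ ≤ w z.2 ^ β₀ :=
              Real.rpow_le_rpow (hw_nonneg z.1) hle hβ₀pos.le
            have hb : Real.log (w z.1) ≤ Real.log (w z.2) := Real.log_le_log h1 hle
            nlinarith
          · have ha : w z.2 ^ β₀ ≤ w z.1 ^ β₀ :=
              Real.rpow_le_rpow (hw_nonneg z.2) hle hβ₀pos.le
            have hb : Real.log (w z.2) ≤ Real.log (w z.1) := Real.log_le_log h2 hle
            nlinarith
        exact mul_nonneg hmain
          (mul_nonneg (Real.rpow_nonneg (hw_nonneg z.1) _)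
            (Real.rpow_nonneg (hw_nonneg z.2) _))
      · rw [← h2, Real.zero_rpow hβ₀pos.ne']
        simp
    · rw [← h1, Real.zero_rpow hβ₀pos.ne']
      simp
  have h12 : Integrable
      (fun z : Ω × Ω => (w z.1 ^ (2 * β₀) * Real.log (w z.1)) * w z.2 ^ β₀
        - w z.1 ^ (2 * β₀) * (w z.2 ^ β₀ * Real.log (w z.2))) (μ.prod μ) := hi1.sub hi2
  have h123 : Integrable
      (fun z : Ω × Ω => (w z.1 ^ (2 * β₀) * Real.log (w z.1)) * w z.2 ^ β₀
        - w z.1 ^ (2 * β₀) * (w z.2 ^ β₀ * Real.log (w z.2))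
        - (w z.1 ^ β₀ * Real.log (w z.1)) * w z.2 ^ (2 * β₀)) (μ.prod μ) := h12.sub hi3
  have hintnn : 0 ≤ ∫ z : Ω × Ω, ((w z.1 ^ (2 * β₀) * Real.log (w z.1)) * w z.2 ^ β₀
        - w z.1 ^ (2 * β₀) * (w z.2 ^ β₀ * Real.log (w z.2))
        - (w z.1 ^ β₀ * Real.log (w z.1)) * w z.2 ^ (2 * β₀)
        + w z.1 ^ β₀ * (w z.2 ^ (2 * β₀) * Real.log (w z.2))) ∂μ.prod μ :=
    integral_nonneg hpnonneg
  have e1 : ∫ z : Ω × Ω, (w z.1 ^ (2 * β₀) * Real.log (w z.1)) * w z.2 ^ β₀ ∂μ.prod μ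
      = (∫ x, w x ^ (2 * β₀) * Real.log (w x) ∂μ) * ∫ x, w x ^ β₀ ∂μ :=
    integral_prod_mul (fun x => w x ^ (2 * β₀) * Real.log (w x)) (fun x => w x ^ β₀)
  have e2 : ∫ z : Ω × Ω, w z.1 ^ (2 * β₀) * (w z.2 ^ β₀ * Real.log (w z.2)) ∂μ.prod μ
      = (∫ x, w x ^ (2 * β₀) ∂μ) * ∫ x, w x ^ β₀ * Real.log (w x) ∂μ :=
    integral_prod_mul (fun x => w x ^ (2 * β₀)) (fun x => w x ^ β₀ * Real.log (w x))
  have e3 : ∫ z : Ω × Ω, (w z.1 ^ β₀ * Real.log (w z.1)) * w z.2 ^ (2 * β₀) ∂μ.prod μ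
      = (∫ x, w x ^ β₀ * Real.log (w x) ∂μ) * ∫ x, w x ^ (2 * β₀) ∂μ :=
    integral_prod_mul (fun x => w x ^ β₀ * Real.log (w x)) (fun x => w x ^ (2 * β₀))
  have e4 : ∫ z : Ω × Ω, w z.1 ^ β₀ * (w z.2 ^ (2 * β₀) * Real.log (w z.2)) ∂μ.prod μ
      = (∫ x, w x ^ β₀ ∂μ) * ∫ x, w x ^ (2 * β₀) * Real.log (w x) ∂μ :=
    integral_prod_mul (fun x => w x ^ β₀) (fun x => w x ^ (2 * β₀) * Real.log (w x))
  rw [integral_add h123 hi4, integral_sub h12 hi3, integral_sub hi1 hi2,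
    e1, e2, e3, e4] at hintnn
  linarith

end AuxLemmas

/-- **Derivative formula for the coefficient of variation in Lemma B.2.**
Under the stated domination hypotheses near `β₀` and `2β₀`, `κ` is differentiable
at `β₀ > 0` (with `κ(β₀) > 0`), with
`κ′(β₀) = ((1 + κ(β₀)²)/κ(β₀)) · (∫ log w dp_{2β₀} − ∫ log w dp_{β₀}) ≥ 0`. -/
theorem kappa_hasDerivAt
    (μ : Measure Ω) [IsProbabilityMeasure μ]
    (w : Ω → ℝ) (hw_meas : Measurable w) (hw_nonneg : ∀ x, 0 ≤ w x)
    (hw_int : ∫ x, w x ∂μ = 1)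
    (β₀ : ℝ) (hβ₀pos : 0 < β₀) (hκpos : 0 < kappa μ w β₀)
    (ε : ℝ) (hε : 0 < ε) (g : Ω → ℝ) (hg : Integrable g μ)
    (hdom₁ : ∀ β : ℝ, |β - β₀| ≤ ε →
      ∀ᵐ x ∂μ, 0 < w x →
        w x ^ β ≤ g x ∧ w x ^ β * |Real.log (w x)| ≤ g x)
    (hdom₂ : ∀ β : ℝ, |β - 2 * β₀| ≤ 2 * ε →
      ∀ᵐ x ∂μ, 0 < w x →
        w x ^ β ≤ g x ∧ w x ^ β * |Real.log (w x)| ≤ g x) :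
    HasDerivAt (kappa μ w)
      ((1 + kappa μ w β₀ ^ 2) / kappa μ w β₀ *
        ((∫ x, Real.log (w x) ∂(temper μ w (2 * β₀)))
          - ∫ x, Real.log (w x) ∂(temper μ w β₀))) β₀
    ∧ 0 ≤ (1 + kappa μ w β₀ ^ 2) / kappa μ w β₀ *
        ((∫ x, Real.log (w x) ∂(temper μ w (2 * β₀)))
          - ∫ x, Real.log (w x) ∂(temper μ w β₀)) := by
  set Z1 := Z μ w β₀ with hZ1def
  set Z2 := Z μ w (2 * β₀) with hZ2def
  set A := ∫ x, w x ^ β₀ * Real.log (w x) ∂μ with hAdef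
  set B := ∫ x, w x ^ (2 * β₀) * Real.log (w x) ∂μ with hBdef
  -- positivity facts
  have hZ1nonneg : 0 ≤ Z1 := integral_nonneg fun x => Real.rpow_nonneg (hw_nonneg x) _
  have hZ1pos : 0 < Z1 := by
    rcases hZ1nonneg.lt_or_eq with h | h
    · exact h
    · exfalso
      have hk0 : kappa μ w β₀ = 0 := by
        rw [kappa, ← hZ1def, ← h, div_zero]
      rw [hk0] at hκpos; exact lt_irrefl _ hκpos
  have hκdef : kappa μ w β₀ = Real.sqrt (Z2 - Z1 ^ 2) / Z1 := rfl
  have hsq_pos : 0 < Real.sqrt (Z2 - Z1 ^ 2) := by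
    by_contra h
    push_neg at h
    have h0 : Real.sqrt (Z2 - Z1 ^ 2) = 0 := le_antisymm h (Real.sqrt_nonneg _)
    rw [hκdef, h0, zero_div] at hκpos
    exact lt_irrefl _ hκpos
  have hVpos : 0 < Z2 - Z1 ^ 2 := Real.sqrt_pos.mp hsq_pos
  have hZ2pos : 0 < Z2 := by nlinarith
  -- a smaller radius
  set ε' := min ε (β₀ / 2) with hε'def
  have hε'pos : 0 < ε' := lt_min hε (by linarith)
  have hε'le : ε' ≤ ε := min_le_left _ _
  have hε'lt : ε' < β₀ := lt_of_le_of_lt (min_le_right _ _) (by linarith)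
  -- derivatives of Z
  obtain ⟨hintA, hdZ1⟩ := hasDerivAt_Z_aux μ hw_meas hw_nonneg hβ₀pos hε'pos hε'lt hg
    (fun β hβ => hdom₁ β (hβ.trans hε'le))
  obtain ⟨hintB, hdZ2⟩ := hasDerivAt_Z_aux μ hw_meas hw_nonneg
    (by linarith : (0:ℝ) < 2 * β₀) (by linarith : (0:ℝ) < 2 * ε') (by linarith) hg
    (fun β hβ => hdom₂ β (hβ.trans (by linarith)))
  -- derivative of β ↦ Z(2β)
  have hinner : HasDerivAt (fun β : ℝ => 2 * β) 2 β₀ := by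
    simpa using (hasDerivAt_id β₀).const_mul 2
  have h2 : HasDerivAt (fun β : ℝ => Z μ w (2 * β)) (B * 2) β₀ :=
    HasDerivAt.comp β₀ hdZ2 hinner
  -- derivative of the variance-type expression
  have hV : HasDerivAt (fun β : ℝ => Z μ w (2 * β) - Z μ w β ^ 2)
      (B * 2 - 2 * Z1 ^ 1 * A) β₀ := by
    have := h2.sub (hdZ1.pow 2)
    simpa [Pi.sub_def, Pi.pow_def] using this
  -- sqrt
  have hsqrt : HasDerivAt (fun β : ℝ => Real.sqrt (Z μ w (2 * β) - Z μ w β ^ 2))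
      (1 / (2 * Real.sqrt (Z2 - Z1 ^ 2)) * (B * 2 - 2 * Z1 ^ 1 * A)) β₀ :=
    (Real.hasDerivAt_sqrt hVpos.ne').comp β₀ hV
  -- quotient
  have hκderiv : HasDerivAt (kappa μ w)
      ((1 / (2 * Real.sqrt (Z2 - Z1 ^ 2)) * (B * 2 - 2 * Z1 ^ 1 * A) * Z1
        - Real.sqrt (Z2 - Z1 ^ 2) * A) / Z1 ^ 2) β₀ :=
    hsqrt.div hdZ1 hZ1pos.ne'
  -- rewrite the temper integrals
  have hT1 : ∫ x, Real.log (w x) ∂(temper μ w β₀) = A / Z1 :=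
    integral_log_temper_aux μ hw_meas hw_nonneg hβ₀pos.le hZ1pos
  have hT2 : ∫ x, Real.log (w x) ∂(temper μ w (2 * β₀)) = B / Z2 :=
    integral_log_temper_aux μ hw_meas hw_nonneg (by linarith) hZ2pos
  -- value equality
  have hs2 : Real.sqrt (Z2 - Z1 ^ 2) ^ 2 = Z2 - Z1 ^ 2 := Real.sq_sqrt hVpos.le
  set s := Real.sqrt (Z2 - Z1 ^ 2) with hsdef
  have hZ2eq : Z2 = s ^ 2 + Z1 ^ 2 := by rw [hs2]; ring
  have hZ2ne : s ^ 2 + Z1 ^ 2 ≠ 0 := by nlinarith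
  have hval : (1 + kappa μ w β₀ ^ 2) / kappa μ w β₀ *
        ((∫ x, Real.log (w x) ∂(temper μ w (2 * β₀)))
          - ∫ x, Real.log (w x) ∂(temper μ w β₀))
      = (1 / (2 * s) * (B * 2 - 2 * Z1 ^ 1 * A) * Z1 - s * A) / Z1 ^ 2 := by
    rw [hT1, hT2, hκdef, hZ2eq]
    field_simp
    ring
  constructor
  · rw [hval]; exact hκderiv
  · -- nonnegativity
    rw [hT1, hT2]
    have hfac : 0 ≤ (1 + kappa μ w β₀ ^ 2) / kappa μ w β₀ := by positivity
    -- integrability of the basic functions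
    have hIA : Integrable (fun x => w x ^ β₀) μ :=
      integrable_rpow_aux μ hw_meas hw_nonneg hβ₀pos hg
        ((hdom₁ β₀ (by rw [sub_self, abs_zero]; exact hε.le)).mono fun x hx h => (hx h).1)
    have hIB : Integrable (fun x => w x ^ (2 * β₀)) μ :=
      integrable_rpow_aux μ hw_meas hw_nonneg (by linarith) hg
        ((hdom₂ (2 * β₀) (by rw [sub_self, abs_zero]; positivity)).mono
          fun x hx h => (hx h).1)
    have hkey : A * Z2 ≤ B * Z1 := by
      rw [hAdef, hBdef, hZ1def, hZ2def]
      simp only [Z]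
      exact chebyshev_aux μ hw_nonneg hβ₀pos hIA hIB hintA hintB
    have hdiffnn : 0 ≤ B / Z2 - A / Z1 := by
      rw [sub_nonneg, div_le_div_iff₀ hZ1pos hZ2pos]
      exact hkey
    exact mul_nonneg hfac hdiffnn
end

section
/- (Convexity lemma used for Lemma B.2.) Let φ : ℝ → ℝ be a convex function. Then the map β ↦ φ(2β) − 2·φ(β) is monotone nondecreasing on [0, ∞): for all 0 ≤ β₁ ≤ β₂, φ(2β₁) − 2φ(β₁) ≤ φ(2β₂) − 2φ(β₂). -/
/-- **Convexity lemma used for Lemma B.2.**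
If `φ : ℝ → ℝ` is convex, then `β ↦ φ(2β) − 2·φ(β)` is monotone nondecreasing on
`[0, ∞)`: for all `0 ≤ β₁ ≤ β₂`, `φ(2β₁) − 2φ(β₁) ≤ φ(2β₂) − 2φ(β₂)`. -/
theorem convex_doubling_monotone
    (φ : ℝ → ℝ) (hφ : ConvexOn ℝ Set.univ φ) :
    ∀ β₁ β₂ : ℝ, 0 ≤ β₁ → β₁ ≤ β₂ →
      φ (2 * β₁) - 2 * φ β₁ ≤ φ (2 * β₂) - 2 * φ β₂ := by
  intro β₁ β₂ h0 h12
  rcases eq_or_lt_of_le h12 with rfl | hlt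
  · exact le_refl _
  have h2 : β₂ ≤ 2 * β₂ := by linarith
  have h1 : β₁ ≤ 2 * β₁ := by linarith
  -- slope (β₁, β₂) ≤ slope (β₁, 2β₂)
  have hA : (φ β₂ - φ β₁) / (β₂ - β₁) ≤ (φ (2 * β₂) - φ β₁) / (2 * β₂ - β₁) :=
    hφ.secant_mono (Set.mem_univ _) (Set.mem_univ _) (Set.mem_univ _)
      (by linarith) (by linarith) (by linarith)
  -- slope (β₁, 2β₂) ≤ slope (2β₁, 2β₂), via base point 2β₂
  have hB : (φ β₁ - φ (2 * β₂)) / (β₁ - 2 * β₂) ≤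
      (φ (2 * β₁) - φ (2 * β₂)) / (2 * β₁ - 2 * β₂) :=
    hφ.secant_mono (Set.mem_univ _) (Set.mem_univ _) (Set.mem_univ _)
      (by linarith) (by linarith) (by linarith)
  have hBe : (φ β₁ - φ (2 * β₂)) / (β₁ - 2 * β₂) = (φ (2 * β₂) - φ β₁) / (2 * β₂ - β₁) := by
    rw [← neg_div_neg_eq]; ring_nf
  have hCe : (φ (2 * β₁) - φ (2 * β₂)) / (2 * β₁ - 2 * β₂) =
      (φ (2 * β₂) - φ (2 * β₁)) / (2 * β₂ - 2 * β₁) := by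
    rw [← neg_div_neg_eq]; ring_nf
  have key : (φ β₂ - φ β₁) / (β₂ - β₁) ≤ (φ (2 * β₂) - φ (2 * β₁)) / (2 * β₂ - 2 * β₁) := by
    rw [← hCe]; exact hA.trans (hBe ▸ hB)
  have hpos : (0:ℝ) < β₂ - β₁ := by linarith
  have hpos2 : (0:ℝ) < 2 * β₂ - 2 * β₁ := by linarith
  rw [div_le_div_iff₀ hpos hpos2] at key
  nlinarith [key]
end
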